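/- Under the noisy mixing model with stationary uncorrelated sources and white noise (as specified in the context), let y_0[n] = wᵀ x[n] and e_0[n] = Σ_{p=2}^{P+1} b_p y_0[n−p] for real coefficients b_2,…,b_{P+1}. Then E[y_0[n] e_0[n]] = Σ_{l=0}^{L−1} g_l² (Σ_{p=2}^{P+1} b_p ρ_l[p]) and E[y_0[n] y_0[n−1]] = Σ_{l=0}^{L−1} g_l² ρ_l[1], where g = Aᵀ w. In particular, the cost J(w) = E[y_0[n] e_0[n]] / E[y_0[n] y_0[n−1]] of the direct adaptive generalized-CCA algorithm involves no contribution from the noise. -/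

import Mathlib

/-!
Substituting the mixing model, `y₀[n] = ∑_l g_l s_l[n] + ∑_i w_i v_i[n]`. Expanding
`E[y₀[n] y₀[m]]` bilinearly, the source–noise cross terms vanish, the sources contribute
`∑_l g_l² ρ_l[n − m]`, and the noise contributes only at `n = m`. Both the numerator and
the denominator of the cost are built from lags `n − m ∈ {1, 2, …, P + 1}`, so the noise
drops out.
-/

open Matrix MeasureTheory Finset

lemma sum_mul_sum_eq_sum_sum {Ω ι κ : Type*} [Fintype ι] [Fintype κ]
    {f : ι → Ω → ℝ} {h : κ → Ω → ℝ} (a : ι → ℝ) (c : κ → ℝ) (ω : Ω) :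
    (∑ i, a i * f i ω) * (∑ j, c j * h j ω) = ∑ i, ∑ j, a i * c j * (f i ω * h j ω) := by
  rw [Finset.sum_mul_sum]
  exact Finset.sum_congr rfl fun i _ => Finset.sum_congr rfl fun j _ => by ring

section Bilinear

variable {Ω ι κ : Type*} [MeasurableSpace Ω] {μ : Measure Ω} [Fintype ι] [Fintype κ]
  {f : ι → Ω → ℝ} {h : κ → Ω → ℝ}

lemma integrable_sum_mul_sum (a : ι → ℝ) (c : κ → ℝ)
    (hfh : ∀ i j, Integrable (fun ω => f i ω * h j ω) μ) :
    Integrable (fun ω => (∑ i, a i * f i ω) * ∑ j, c j * h j ω) μ := by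
  simp_rw [sum_mul_sum_eq_sum_sum]
  exact integrable_finsetSum _ fun i _ =>
    integrable_finsetSum _ fun j _ => (hfh i j).const_mul _

lemma integral_sum_mul_sum (a : ι → ℝ) (c : κ → ℝ)
    (hfh : ∀ i j, Integrable (fun ω => f i ω * h j ω) μ) :
    ∫ ω, (∑ i, a i * f i ω) * (∑ j, c j * h j ω) ∂μ
      = ∑ i, ∑ j, a i * c j * ∫ ω, f i ω * h j ω ∂μ := by
  simp_rw [sum_mul_sum_eq_sum_sum]
  rw [integral_finsetSum _ fun i _ =>
    integrable_finsetSum _ fun j _ => (hfh i j).const_mul _]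
  refine Finset.sum_congr rfl fun i _ => ?_
  rw [integral_finsetSum _ fun j _ => (hfh i j).const_mul _]
  simp_rw [integral_const_mul]

end Bilinear

section AddMulAdd

variable {Ω : Type*} [MeasurableSpace Ω] {μ : Measure Ω} {f g f' g' : Ω → ℝ}

lemma integrable_add_mul_add (h₁ : Integrable (fun ω => f ω * f' ω) μ)
    (h₂ : Integrable (fun ω => f ω * g' ω) μ) (h₃ : Integrable (fun ω => g ω * f' ω) μ)
    (h₄ : Integrable (fun ω => g ω * g' ω) μ) :
    Integrable (fun ω => (f ω + g ω) * (f' ω + g' ω)) μ := by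
  simp_rw [add_mul, mul_add]
  exact (h₁.add h₂).add (h₃.add h₄)

lemma integral_add_mul_add (h₁ : Integrable (fun ω => f ω * f' ω) μ)
    (h₂ : Integrable (fun ω => f ω * g' ω) μ) (h₃ : Integrable (fun ω => g ω * f' ω) μ)
    (h₄ : Integrable (fun ω => g ω * g' ω) μ) :
    ∫ ω, (f ω + g ω) * (f' ω + g' ω) ∂μ
      = ((∫ ω, f ω * f' ω ∂μ) + ∫ ω, f ω * g' ω ∂μ)
        + ((∫ ω, g ω * f' ω ∂μ) + ∫ ω, g ω * g' ω ∂μ) := by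
  have h₁₂ : Integrable (fun ω => f ω * f' ω + f ω * g' ω) μ := h₁.add h₂
  have h₃₄ : Integrable (fun ω => g ω * f' ω + g ω * g' ω) μ := h₃.add h₄
  simp_rw [add_mul, mul_add]
  rw [integral_add h₁₂ h₃₄, integral_add h₁ h₂, integral_add h₃ h₄]

end AddMulAdd

section NoisyMixture

variable {Ω ι κ : Type*} [Fintype ι] [Fintype κ]
  {s : ι → ℤ → Ω → ℝ} {v : κ → ℤ → Ω → ℝ} {ρ : ι → ℤ → ℝ} {σv : ℝ}

lemma output_eq_signal_add_noise (A : Matrix κ ι ℝ) (w : κ → ℝ) {x : κ → ℤ → Ω → ℝ}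
    (hx : ∀ i n ω, x i n ω = (∑ l, A i l * s l n ω) + v i n ω)
    {y : ℤ → Ω → ℝ} (hy : ∀ n ω, y n ω = ∑ i, w i * x i n ω) (n : ℤ) (ω : Ω) :
    y n ω = (∑ l, (Aᵀ *ᵥ w) l * s l n ω) + ∑ i, w i * v i n ω := by
  simp only [hy, hx, mul_add, Finset.sum_add_distrib, Finset.mul_sum, mulVec, dotProduct,
    transpose_apply, Finset.sum_mul]
  rw [Finset.sum_comm]
  congr 1
  exact Finset.sum_congr rfl fun l _ => Finset.sum_congr rfl fun i _ => by ring

variable [MeasurableSpace Ω] {μ : Measure Ω}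
  (hss_int : ∀ k l n m, Integrable (fun ω => s k n ω * s l m ω) μ)
  (hsv_int : ∀ l i n m, Integrable (fun ω => s l n ω * v i m ω) μ)
  (hvv_int : ∀ i j n m, Integrable (fun ω => v i n ω * v j m ω) μ)
  (g : ι → ℝ) (w : κ → ℝ) {y : ℤ → Ω → ℝ}
  (hy : ∀ n ω, y n ω = (∑ l, g l * s l n ω) + ∑ i, w i * v i n ω)
include hss_int hsv_int hvv_int hy

lemma integrable_output_mul_output (n m : ℤ) :
    Integrable (fun ω => y n ω * y m ω) μ := by
  simp_rw [hy]
  exact integrable_add_mul_add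
    (integrable_sum_mul_sum _ _ fun k l => hss_int k l n m)
    (integrable_sum_mul_sum _ _ fun l i => hsv_int l i n m)
    (integrable_sum_mul_sum _ _ fun i l => by simpa only [mul_comm] using hsv_int l i m n)
    (integrable_sum_mul_sum _ _ fun i j => hvv_int i j n m)

lemma integral_output_mul_output_of_ne [DecidableEq ι] [DecidableEq κ]
    (hss : ∀ k l n m, ∫ ω, s k n ω * s l m ω ∂μ = if k = l then ρ l (n - m) else 0)
    (hvv : ∀ i j n m, ∫ ω, v i n ω * v j m ω ∂μ = if i = j ∧ n = m then σv ^ 2 else 0)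
    (hsv : ∀ l i n m, ∫ ω, s l n ω * v i m ω ∂μ = 0) {n m : ℤ} (hnm : n ≠ m) :
    ∫ ω, y n ω * y m ω ∂μ = ∑ l, g l ^ 2 * ρ l (n - m) := by
  have hvs_int : ∀ i l, Integrable (fun ω => v i n ω * s l m ω) μ := fun i l => by
    simpa only [mul_comm] using hsv_int l i m n
  have hvs : ∀ i l, ∫ ω, v i n ω * s l m ω ∂μ = 0 := fun i l => by
    simpa only [mul_comm] using hsv l i m n
  simp_rw [hy]
  rw [integral_add_mul_add
      (integrable_sum_mul_sum _ _ fun k l => hss_int k l n m)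
      (integrable_sum_mul_sum _ _ fun l i => hsv_int l i n m)
      (integrable_sum_mul_sum _ _ hvs_int)
      (integrable_sum_mul_sum _ _ fun i j => hvv_int i j n m),
    integral_sum_mul_sum _ _ fun k l => hss_int k l n m,
    integral_sum_mul_sum _ _ fun l i => hsv_int l i n m,
    integral_sum_mul_sum _ _ hvs_int,
    integral_sum_mul_sum _ _ fun i j => hvv_int i j n m]
  simp only [hss, hsv, hvs, hvv, hnm, and_false, if_false, mul_ite, mul_zero,
    Finset.sum_ite_eq, Finset.mem_univ, if_true, Finset.sum_const_zero, add_zero]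
  exact Finset.sum_congr rfl fun l _ => by ring

end NoisyMixture

theorem stmt_13_general (Ω : Type*) [MeasureSpace Ω]
    (L M P : ℕ)
    (s : Fin L → ℤ → Ω → ℝ) (v : Fin M → ℤ → Ω → ℝ)
    (ρ : Fin L → ℤ → ℝ) (σv : ℝ)
    (hss_int : ∀ (k l : Fin L) (n m : ℤ), Integrable fun ω => s k n ω * s l m ω)
    (hsv_int : ∀ (l : Fin L) (i : Fin M) (n m : ℤ), Integrable fun ω => s l n ω * v i m ω)
    (hvv_int : ∀ (i j : Fin M) (n m : ℤ), Integrable fun ω => v i n ω * v j m ω)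
    (hss : ∀ (k l : Fin L) (n m : ℤ),
      ∫ ω, s k n ω * s l m ω = if k = l then ρ l (n - m) else 0)
    (hvv : ∀ (i j : Fin M) (n m : ℤ),
      ∫ ω, v i n ω * v j m ω = if i = j ∧ n = m then σv ^ 2 else 0)
    (hsv : ∀ (l : Fin L) (i : Fin M) (n m : ℤ), ∫ ω, s l n ω * v i m ω = 0)
    (A : Matrix (Fin M) (Fin L) ℝ) (w : Fin M → ℝ)
    (x : Fin M → ℤ → Ω → ℝ)
    (hx : ∀ i n ω, x i n ω = (∑ l, A i l * s l n ω) + v i n ω)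
    (y : ℤ → Ω → ℝ) (hy : ∀ n ω, y n ω = ∑ i, w i * x i n ω)
    (b : ℕ → ℝ)
    (e : ℤ → Ω → ℝ)
    (he : ∀ n ω, e n ω = ∑ p ∈ Finset.Icc 2 (P + 1), b p * y (n - (p : ℤ)) ω)
    (g : Fin L → ℝ) (hg : g = Aᵀ *ᵥ w) :
    ∀ n : ℤ,
      (∫ ω, y n ω * e n ω =
        ∑ l, (g l) ^ 2 * ∑ p ∈ Finset.Icc 2 (P + 1), b p * ρ l (p : ℤ)) ∧
      (∫ ω, y n ω * y (n - 1) ω = ∑ l, (g l) ^ 2 * ρ l 1) := by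
  subst hg
  have hy' := output_eq_signal_add_noise A w hx hy
  have lag : ∀ n m : ℤ, n ≠ m → ∫ ω, y n ω * y m ω = ∑ l, (Aᵀ *ᵥ w) l ^ 2 * ρ l (n - m) :=
    fun n m => integral_output_mul_output_of_ne hss_int hsv_int hvv_int _ w hy' hss hvv hsv
  intro n
  refine ⟨?_, by simpa using lag n (n - 1) (by omega)⟩
  have lag_p : ∀ p ∈ Finset.Icc 2 (P + 1),
      ∫ ω, b p * (y n ω * y (n - p) ω) = ∑ l, (Aᵀ *ᵥ w) l ^ 2 * (b p * ρ l p) := by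
    intro p hp
    have hp2 := (Finset.mem_Icc.mp hp).1
    rw [integral_const_mul, lag n (n - p) (by omega), sub_sub_cancel, Finset.mul_sum]
    exact Finset.sum_congr rfl fun l _ => by ring
  simp_rw [he, Finset.mul_sum, mul_left_comm (y n _)]
  rw [integral_finsetSum (Finset.Icc 2 (P + 1)) fun p _ =>
      (integrable_output_mul_output hss_int hsv_int hvv_int _ w hy' n (n - (p : ℤ))).const_mul _,
    Finset.sum_congr rfl lag_p, Finset.sum_comm]

/-- Noise-free numerator and denominator of the direct adaptive GCCA cost: under the
noisy mixing model with stationary uncorrelated sources and white noise, with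
`y₀[n] = wᵀ x[n]` and `e₀[n] = ∑_{p=2}^{P+1} b p y₀[n−p]`, one has
`E[y₀[n] e₀[n]] = ∑_l g_l² (∑_{p=2}^{P+1} b p ρ_l[p])` and
`E[y₀[n] y₀[n−1]] = ∑_l g_l² ρ_l[1]` with `g = Aᵀ w`; so the cost
`J(w) = E[y₀ e₀]/E[y₀[n] y₀[n−1]]` involves no contribution from the noise. -/
theorem stmt_13 (Ω : Type*) [MeasureSpace Ω] [IsProbabilityMeasure (volume : Measure Ω)]
    (L M P : ℕ)
    (s : Fin L → ℤ → Ω → ℝ) (v : Fin M → ℤ → Ω → ℝ)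
    (ρ : Fin L → ℤ → ℝ) (σv : ℝ)
    (hss_int : ∀ (k l : Fin L) (n m : ℤ), Integrable fun ω => s k n ω * s l m ω)
    (hsv_int : ∀ (l : Fin L) (i : Fin M) (n m : ℤ), Integrable fun ω => s l n ω * v i m ω)
    (hvv_int : ∀ (i j : Fin M) (n m : ℤ), Integrable fun ω => v i n ω * v j m ω)
    (hss : ∀ (k l : Fin L) (n m : ℤ),
      ∫ ω, s k n ω * s l m ω = if k = l then ρ l (n - m) else 0)
    (hvv : ∀ (i j : Fin M) (n m : ℤ),
      ∫ ω, v i n ω * v j m ω = if i = j ∧ n = m then σv ^ 2 else 0)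
    (hsv : ∀ (l : Fin L) (i : Fin M) (n m : ℤ), ∫ ω, s l n ω * v i m ω = 0)
    (A : Matrix (Fin M) (Fin L) ℝ) (w : Fin M → ℝ)
    (x : Fin M → ℤ → Ω → ℝ)
    (hx : ∀ i n ω, x i n ω = (∑ l, A i l * s l n ω) + v i n ω)
    (y : ℤ → Ω → ℝ) (hy : ∀ n ω, y n ω = ∑ i, w i * x i n ω)
    (b : ℕ → ℝ)
    (e : ℤ → Ω → ℝ)
    (he : ∀ n ω, e n ω = ∑ p ∈ Finset.Icc 2 (P + 1), b p * y (n - (p : ℤ)) ω)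
    (g : Fin L → ℝ) (hg : g = Aᵀ *ᵥ w) :
    ∀ n : ℤ,
      (∫ ω, y n ω * e n ω =
        ∑ l, (g l) ^ 2 * ∑ p ∈ Finset.Icc 2 (P + 1), b p * ρ l (p : ℤ)) ∧
      (∫ ω, y n ω * y (n - 1) ω = ∑ l, (g l) ^ 2 * ρ l 1) :=
  stmt_13_general Ω L M P s v ρ σv hss_int hsv_int hvv_int hss hvv hsv A w x hx y hy b e he g hg
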